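/- Let n ≥ 2, let Δ be the convex hull of a finite set of points of ℝ^n, contained in an affine hyperplane H with 0 ∉ H and with non-empty interior in H, and let Γ(Δ) = ∪_{a ∈ Δ} ℝ_{≥0}·a be the polyhedral cone projected from Δ. Then the following are equivalent: (1) there exists a finite composition Φ of order-preserving monomial blowing-ups with Φ(Γ(Δ)) ⊆ ℝ_{≥0}^n; (2) for every non-zero vector c ∈ Γ(Δ), the first non-zero component of c is positive (equivalently, 0 <_lex c). -/

import Mathlib

noncomputable section

/-- The monomial blowing-up `φ_{ij}` of `ℝ^n` (for distinct `i`, `j`): the `j`-th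
coordinate becomes `a i + a j`, the other coordinates are unchanged. -/
def blowUp (n : ℕ) (i j : Fin n) : (Fin n → ℝ) → (Fin n → ℝ) :=
  fun a l => if l = j then a i + a j else a l

/-- The monomial blowing-down `φ_{ij}⁻¹` of `ℝ^n`, the inverse of `blowUp n i j`. -/
def blowDown (n : ℕ) (i j : Fin n) : (Fin n → ℝ) → (Fin n → ℝ) :=
  fun a l => if l = j then a l - a i else a l

/-- `Φ` is a finite composition of order-preserving monomial blowing-ups `φ_{ij}`, `i < j`. -/
def IsBlowUpComp (n : ℕ) (Φ : (Fin n → ℝ) → (Fin n → ℝ)) : Prop :=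
  ∃ L : List ((Fin n → ℝ) → (Fin n → ℝ)),
    (∀ g ∈ L, ∃ i j : Fin n, i < j ∧ g = blowUp n i j) ∧ Φ = L.foldr (· ∘ ·) id

/-- `Φ` is a finite composition of order-preserving monomial blowing-downs `φ_{ij}⁻¹`, `i < j`. -/
def IsBlowDownComp (n : ℕ) (Φ : (Fin n → ℝ) → (Fin n → ℝ)) : Prop :=
  ∃ L : List ((Fin n → ℝ) → (Fin n → ℝ)),
    (∀ g ∈ L, ∃ i j : Fin n, i < j ∧ g = blowDown n i j) ∧ Φ = L.foldr (· ∘ ·) id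

/-! Blow-ups `φ_{ij}` with `i < j` preserve lexicographic negativity, so no composition of them
makes a lexicographically negative vector nonnegative. Conversely, blow-ups are linear, so it
suffices to make the finitely many generators `F` of the cone nonnegative. This is done by
downward induction on the index `k` of the leading coordinate: the generators vanishing up to `k`
are made nonnegative by blow-ups `φ_{ij}` with `i > k`, which fix the first `k + 1` coordinates;
the remaining generators have positive `k`-th coordinate, and applying every `φ_{kj}`, `j > k`,
often enough makes all their later coordinates nonnegative without changing the generators
already treated, whose `k`-th coordinate vanishes. -/

section

variable {n : ℕ}

theorem blowUp_add (i j : Fin n) (a b : Fin n → ℝ) :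
    blowUp n i j (a + b) = blowUp n i j a + blowUp n i j b := by
  funext l; simp only [blowUp, Pi.add_apply]; split_ifs <;> ring

theorem blowUp_smul (i j : Fin n) (r : ℝ) (a : Fin n → ℝ) :
    blowUp n i j (r • a) = r • blowUp n i j a := by
  funext l; simp only [blowUp, Pi.smul_apply, smul_eq_mul]; split_ifs <;> ring

theorem blowUp_iterate {i j : Fin n} (hij : i ≠ j) (K : ℕ) (a : Fin n → ℝ) :
    (blowUp n i j)^[K] a = fun l => if l = j then K * a i + a j else a l := by
  induction K with
  | zero => funext l; split_ifs with h <;> simp [h]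
  | succ K ih =>
    funext l
    rw [Function.iterate_succ_apply', ih]
    simp only [blowUp, if_neg hij]
    split_ifs <;> push_cast <;> ring

theorem toLex_blowUp_lt_zero {i j : Fin n} (hij : i < j) {v : Fin n → ℝ}
    (hv : toLex v < toLex 0) : toLex (blowUp n i j v) < toLex 0 := by
  obtain ⟨k, hvk, hk⟩ := hv
  replace hvk : ∀ l < k, v l = 0 := hvk
  replace hk : v k < 0 := hk
  refine ⟨k, fun l hl => show blowUp n i j v l = 0 from ?_, show blowUp n i j v k < 0 from ?_⟩
    <;> simp only [blowUp] <;> split_ifs with h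
  · subst h; rw [hvk i (hij.trans hl), hvk l hl, add_zero]
  · exact hvk l hl
  · subst h; rwa [hvk i hij, zero_add]
  · exact hk

theorem isBlowUpComp_id : IsBlowUpComp n id := ⟨[], by simp, rfl⟩

theorem IsBlowUpComp.blowUp_comp {Φ : (Fin n → ℝ) → (Fin n → ℝ)} (hΦ : IsBlowUpComp n Φ)
    {i j : Fin n} (hij : i < j) : IsBlowUpComp n (blowUp n i j ∘ Φ) := by
  obtain ⟨L, hL, rfl⟩ := hΦ
  refine ⟨blowUp n i j :: L, ?_, rfl⟩
  rintro g (_ | ⟨_, hg⟩)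
  exacts [⟨i, j, hij, rfl⟩, hL g hg]

theorem IsBlowUpComp.induction {P : ((Fin n → ℝ) → (Fin n → ℝ)) → Prop} (h_id : P id)
    (h_blowUp : ∀ Φ i j, i < j → P Φ → P (blowUp n i j ∘ Φ))
    {Φ : (Fin n → ℝ) → (Fin n → ℝ)} (hΦ : IsBlowUpComp n Φ) : P Φ := by
  obtain ⟨L, hL, rfl⟩ := hΦ
  induction L with
  | nil => exact h_id
  | cons g L ih =>
    obtain ⟨i, j, hij, rfl⟩ := hL g List.mem_cons_self
    exact h_blowUp _ i j hij (ih fun g hg => hL g (List.mem_cons_of_mem _ hg))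

theorem IsBlowUpComp.comp {Φ Ψ : (Fin n → ℝ) → (Fin n → ℝ)} (hΦ : IsBlowUpComp n Φ)
    (hΨ : IsBlowUpComp n Ψ) : IsBlowUpComp n (Φ ∘ Ψ) :=
  hΦ.induction (P := fun Φ => IsBlowUpComp n (Φ ∘ Ψ)) hΨ fun _ _ _ hij h => h.blowUp_comp hij

theorem IsBlowUpComp.iterate {Φ : (Fin n → ℝ) → (Fin n → ℝ)} (hΦ : IsBlowUpComp n Φ) (K : ℕ) :
    IsBlowUpComp n Φ^[K] := by
  induction K with
  | zero => exact isBlowUpComp_id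
  | succ K ih => rw [Function.iterate_succ']; exact hΦ.comp ih

theorem IsBlowUpComp.isLinearMap {Φ : (Fin n → ℝ) → (Fin n → ℝ)} (hΦ : IsBlowUpComp n Φ) :
    IsLinearMap ℝ Φ :=
  hΦ.induction ⟨fun _ _ => rfl, fun _ _ => rfl⟩ fun Φ i j _ h =>
    ⟨fun a b => by simp only [Function.comp_apply, h.map_add, blowUp_add],
      fun r a => by simp only [Function.comp_apply, h.map_smul, blowUp_smul]⟩

theorem IsBlowUpComp.toLex_lt_zero {Φ : (Fin n → ℝ) → (Fin n → ℝ)} (hΦ : IsBlowUpComp n Φ)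
    {v : Fin n → ℝ} (hv : toLex v < toLex 0) : toLex (Φ v) < toLex 0 :=
  hΦ.induction (P := fun Φ => toLex (Φ v) < toLex 0) hv fun _ _ _ hij h =>
    toLex_blowUp_lt_zero hij h

def shear (k : Fin n) (T : Finset (Fin n)) (K : ℕ) (a : Fin n → ℝ) : Fin n → ℝ :=
  fun l => if l ∈ T then K * a k + a l else a l

theorem isBlowUpComp_shear {k : Fin n} {T : Finset (Fin n)} (hT : ∀ j ∈ T, k < j) (K : ℕ) :
    IsBlowUpComp n (shear k T K) := by
  induction T using Finset.induction_on with
  | empty =>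
    convert isBlowUpComp_id
    funext a l
    simp [shear]
  | insert j T hjT ih =>
    have hkj : k < j := hT j (Finset.mem_insert_self j T)
    have hkT : k ∉ T := fun hk => lt_irrefl k (hT k (Finset.mem_insert_of_mem hk))
    have : shear k (insert j T) K = (blowUp n k j)^[K] ∘ shear k T K := by
      funext a l
      simp only [Function.comp_apply, blowUp_iterate hkj.ne, shear, if_neg hkT, if_neg hjT,
        Finset.mem_insert]
      by_cases hlj : l = j <;> simp [hlj]
    rw [this]
    exact ((isBlowUpComp_id.blowUp_comp hkj).iterate K).comp
      (ih fun j hj => hT j (Finset.mem_insert_of_mem hj))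

theorem exists_nat_forall_nonneg_mul_add {ι : Type*} (s : Finset ι) (a b : ι → ℝ)
    (ha : ∀ i ∈ s, 0 < a i) : ∃ K : ℕ, ∀ i ∈ s, 0 ≤ K * a i + b i := by
  have : ∀ᶠ K : ℕ in Filter.atTop, ∀ i ∈ s, 0 ≤ K * a i + b i := by
    refine (Filter.eventually_all_finset s).2 fun i hi => ?_
    filter_upwards [tendsto_natCast_atTop_atTop.eventually_ge_atTop (-b i / a i)] with K hK
    have := (div_le_iff₀ (ha i hi)).1 hK
    linarith
  exact this.exists

theorem nonneg_apply_of_toLex_nonneg {v : Fin n → ℝ} (hv : toLex 0 ≤ toLex v) {k : Fin n}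
    (hvk : ∀ l < k, v l = 0) : 0 ≤ v k := by
  by_contra! hk
  exact hv.not_gt ⟨k, hvk, hk⟩

theorem exists_isBlowUpComp_nonneg (k : ℕ) (S : Finset (Fin n → ℝ))
    (hS : ∀ v ∈ S, toLex 0 ≤ toLex v) (hSk : ∀ v ∈ S, ∀ l : Fin n, (l : ℕ) < k → v l = 0) :
    ∃ Φ, IsBlowUpComp n Φ ∧ (∀ a, ∀ l : Fin n, (l : ℕ) < k → Φ a l = a l) ∧
      ∀ v ∈ S, 0 ≤ Φ v := by
  by_cases hkn : n ≤ k
  · refine ⟨id, isBlowUpComp_id, fun _ _ _ => rfl, fun v hv l => ?_⟩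
    exact (hSk v hv l (l.2.trans_le hkn)).ge
  set kf : Fin n := ⟨k, by omega⟩
  obtain ⟨Ψ, hΨ, hΨfix, hΨS⟩ := exists_isBlowUpComp_nonneg (k + 1) (S.filter (· kf = 0))
    (fun v hv => hS v (Finset.mem_filter.1 hv).1) fun v hv l hl => by
      obtain ⟨hvS, hvk⟩ := Finset.mem_filter.1 hv
      rcases (Nat.lt_succ_iff.1 hl).lt_or_eq with hl | hl
      exacts [hSk v hvS l hl, (Fin.ext hl : l = kf) ▸ hvk]
  have hlead (v) (hv : v ∈ S) : 0 ≤ v kf :=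
    nonneg_apply_of_toLex_nonneg (hS v hv) fun l hl => hSk v hv l hl
  obtain ⟨K, hK⟩ := exists_nat_forall_nonneg_mul_add (S.filter (0 < · kf) ×ˢ Finset.univ)
    (fun p => p.1 kf) (fun p => Ψ p.1 p.2)
    fun p hp => (Finset.mem_filter.1 (Finset.mem_product.1 hp).1).2
  refine ⟨shear kf (Finset.Ioi kf) K ∘ Ψ,
    (isBlowUpComp_shear (fun j hj => Finset.mem_Ioi.1 hj) K).comp hΨ, fun a l hl => ?_,
    fun v hv l => ?_⟩
  · have hlk : ¬kf < l := not_lt.2 hl.le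
    simp only [Function.comp_apply, shear, Finset.mem_Ioi, if_neg hlk]
    exact hΨfix a l (by omega)
  have hΨk : Ψ v kf = v kf := hΨfix v kf (by simp [kf])
  simp only [Function.comp_apply, shear, Finset.mem_Ioi]
  rcases (hlead v hv).eq_or_lt with hvk | hvk
  · have := hΨS v (Finset.mem_filter.2 ⟨hv, hvk.symm⟩) l
    split_ifs <;> simpa [hΨk, ← hvk] using this
  split_ifs with hl
  · rw [Pi.zero_apply, hΨk]
    exact hK (v, l) (by simp [hv, hvk])
  have hlk : (l : ℕ) ≤ k := not_lt.1 hl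
  rw [hΨfix v l (by omega)]
  rcases (not_lt.1 hl).lt_or_eq with hl | rfl
  exacts [(hSk v hv l hl).ge, hvk.le]
termination_by n - k

theorem IsLinearMap.nonneg_apply_smul_of_mem_convexHull {E β : Type*} [AddCommGroup E]
    [Module ℝ E] [AddCommGroup β] [PartialOrder β] [IsOrderedAddMonoid β] [Module ℝ β]
    [PosSMulMono ℝ β] {f : E → β} (hf : IsLinearMap ℝ f) {s : Set E} (hs : ∀ x ∈ s, 0 ≤ f x)
    {r : ℝ} (hr : 0 ≤ r) {a : E} (ha : a ∈ convexHull ℝ s) : 0 ≤ f (r • a) := by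
  have hfa : f a ∈ convexHull ℝ (f '' s) := hf.image_convexHull s ▸ Set.mem_image_of_mem f ha
  rw [hf.map_smul]
  exact smul_nonneg hr (convexHull_min (Set.image_subset_iff.2 hs) (convex_Ici 0) hfa)

end

theorem polyhedralCone_bringable_to_first_quadrant_iff_lex_positive_general
    (n : ℕ)
    (F : Finset (Fin n → ℝ))
    (Δ : Set (Fin n → ℝ)) (hΔ : Δ = convexHull ℝ (F : Set (Fin n → ℝ)))
    (Γ : Set (Fin n → ℝ)) (hΓ : Γ = {w | ∃ r : ℝ, 0 ≤ r ∧ ∃ a ∈ Δ, w = r • a}) :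
    (∃ Φ : (Fin n → ℝ) → (Fin n → ℝ), IsBlowUpComp n Φ ∧
        ∀ w ∈ Φ '' Γ, ∀ l : Fin n, 0 ≤ w l) ↔
      (∀ w ∈ Γ, w ≠ 0 → toLex (0 : Fin n → ℝ) < toLex w) := by
  subst hΓ hΔ
  constructor
  · rintro ⟨Φ, hΦ, hΦΓ⟩ w hw hw0
    by_contra hw_pos
    have hw_neg : toLex w < toLex 0 := (not_lt.1 hw_pos).lt_of_ne (toLex.injective.ne hw0)
    have hΦw : 0 ≤ Φ w := hΦΓ (Φ w) ⟨w, hw, rfl⟩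
    exact (hΦ.toLex_lt_zero hw_neg).not_ge (Pi.toLex_monotone hΦw)
  · intro hlex
    have hF (v) (hv : v ∈ F) : toLex 0 ≤ toLex v := by
      rcases eq_or_ne v 0 with rfl | hv0
      · exact le_rfl
      · exact (hlex v ⟨1, zero_le_one, v, subset_convexHull ℝ _ hv, (one_smul ℝ v).symm⟩ hv0).le
    obtain ⟨Φ, hΦ, -, hΦF⟩ := exists_isBlowUpComp_nonneg 0 F hF (by simp)
    refine ⟨Φ, hΦ, ?_⟩
    rintro _ ⟨_, ⟨r, hr, a, ha, rfl⟩, rfl⟩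
    exact hΦ.isLinearMap.nonneg_apply_smul_of_mem_convexHull hΦF hr ha

/-- **(Theorem `2008051`).**  Let `Δ` be the convex hull of a finite set of points of `ℝ^n`,
contained in an affine hyperplane `H = {x | φ x = c}` with `0 ∉ H` (i.e. `c ≠ 0`) and with
non-empty interior in `H`, and let `Γ(Δ) = ⋃_{a ∈ Δ} ℝ_{≥0}·a` be the polyhedral cone
projected from `Δ`.  Then the following are equivalent: (1) there is a finite composition
`Φ` of order-preserving monomial blowing-ups with `Φ(Γ(Δ)) ⊆ ℝ_{≥0}^n`; (2) every non-zero
vector of `Γ(Δ)` is lexicographically positive (its first non-zero component is positive). -/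
theorem polyhedralCone_bringable_to_first_quadrant_iff_lex_positive
    (n : ℕ) (hn : 2 ≤ n)
    (F : Finset (Fin n → ℝ))
    (φ : (Fin n → ℝ) →ₗ[ℝ] ℝ) (c : ℝ) (hc : c ≠ 0)
    (Δ : Set (Fin n → ℝ)) (hΔ : Δ = convexHull ℝ (F : Set (Fin n → ℝ)))
    (hΔH : ∀ x ∈ Δ, φ x = c)
    (hint : ∃ x ∈ Δ, ∃ ε > 0, ∀ y : Fin n → ℝ, φ y = c → dist y x < ε → y ∈ Δ)
    (Γ : Set (Fin n → ℝ)) (hΓ : Γ = {w | ∃ r : ℝ, 0 ≤ r ∧ ∃ a ∈ Δ, w = r • a}) :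
    (∃ Φ : (Fin n → ℝ) → (Fin n → ℝ), IsBlowUpComp n Φ ∧
        ∀ w ∈ Φ '' Γ, ∀ l : Fin n, 0 ≤ w l) ↔
      (∀ w ∈ Γ, w ≠ 0 → toLex (0 : Fin n → ℝ) < toLex w) :=
  polyhedralCone_bringable_to_first_quadrant_iff_lex_positive_general n F Δ hΔ Γ hΓ
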